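/- Fix constants a₀ ≠ 0 and a₁ ∈ ℝ, and let φ(t,s) = a₀/√t + a₁ s/t for t > 0, s ∈ ℝ. Define on the open set of points (t,s) with t > 0 and φ(t,s) ≠ 0 the functions H(t,s) = (φ₂₂ − 2(φ₁ − sφ₁₂)) / (2(φ − sφ₂ + (t − s²)φ₂₂)) and E(t,s) = (φ₂ + 2sφ₁)/(2φ) − H(t,s)·(sφ + (t − s²)φ₂)/φ, where subscripts 1 and 2 denote partial derivatives with respect to t and s respectively. Then at every such point: E₂₂ = 0, H₂₂₂ = 0, and (E − sE₂)φ₂ + (H₂ − sH₂₂)(sφ + (t − s²)φ₂) = 0. -/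

import Mathlib

/-
For `φ = a₀/√t + a₁ s/t` one has `φ₂ = a₁/t`, `φ₂₂ = 0` and `φ - s φ₂ = a₀/√t ≠ 0`, so
`H = 1/(2t)` does not depend on `s`, and on the open set where `φ ≠ 0` one finds `E = -s/t`.
Hence `E₂₂ = H₂ = H₂₂ = H₂₂₂ = 0` and `E - s E₂ = 0`, which gives all three identities.
-/

noncomputable section

/-- `φ(t,s) = a₀/√t + a₁ s/t`. -/
def phiFn (a₀ a₁ : ℝ) (t s : ℝ) : ℝ := a₀ / Real.sqrt t + a₁ * s / t

/-- `φ₁`, the partial derivative of `φ` with respect to the first variable. -/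
def phi1 (a₀ a₁ : ℝ) (t s : ℝ) : ℝ := deriv (fun u => phiFn a₀ a₁ u s) t

/-- `φ₂`, the partial derivative of `φ` with respect to the second variable. -/
def phi2 (a₀ a₁ : ℝ) (t s : ℝ) : ℝ := deriv (phiFn a₀ a₁ t) s

/-- `φ₁₂ = ∂²φ/∂s∂t`. -/
def phi12 (a₀ a₁ : ℝ) (t s : ℝ) : ℝ := deriv (fun v => phi1 a₀ a₁ t v) s

/-- `φ₂₂`, the second `s`-derivative of `φ`. -/
def phi22 (a₀ a₁ : ℝ) (t s : ℝ) : ℝ := deriv (phi2 a₀ a₁ t) s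

/-- The function `H` from the spray coefficients. -/
def Hfn (a₀ a₁ : ℝ) (t s : ℝ) : ℝ :=
  (phi22 a₀ a₁ t s - 2 * (phi1 a₀ a₁ t s - s * phi12 a₀ a₁ t s)) /
    (2 * (phiFn a₀ a₁ t s - s * phi2 a₀ a₁ t s + (t - s ^ 2) * phi22 a₀ a₁ t s))

/-- The function `E` from the spray coefficients. -/
def Efn (a₀ a₁ : ℝ) (t s : ℝ) : ℝ :=
  (phi2 a₀ a₁ t s + 2 * s * phi1 a₀ a₁ t s) / (2 * phiFn a₀ a₁ t s)
    - Hfn a₀ a₁ t s * (s * phiFn a₀ a₁ t s + (t - s ^ 2) * phi2 a₀ a₁ t s)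
      / phiFn a₀ a₁ t s

/-- `E₂`, the `s`-derivative of `E`. -/
def E2 (a₀ a₁ : ℝ) (t s : ℝ) : ℝ := deriv (Efn a₀ a₁ t) s

/-- `E₂₂`, the second `s`-derivative of `E`. -/
def E22 (a₀ a₁ : ℝ) (t s : ℝ) : ℝ := deriv (E2 a₀ a₁ t) s

/-- `H₂`, the `s`-derivative of `H`. -/
def H2 (a₀ a₁ : ℝ) (t s : ℝ) : ℝ := deriv (Hfn a₀ a₁ t) s

/-- `H₂₂`, the second `s`-derivative of `H`. -/
def H22 (a₀ a₁ : ℝ) (t s : ℝ) : ℝ := deriv (H2 a₀ a₁ t) s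

/-- `H₂₂₂`, the third `s`-derivative of `H`. -/
def H222 (a₀ a₁ : ℝ) (t s : ℝ) : ℝ := deriv (H22 a₀ a₁ t) s

open Set

section
variable {a₀ a₁ t : ℝ}

theorem phi2_eq : phi2 a₀ a₁ t = fun _ => a₁ / t := by
  ext s
  have h : HasDerivAt (fun v => a₀ / √t + a₁ * v / t) (a₁ / t) s := by
    simpa using (((hasDerivAt_id s).const_mul a₁).div_const t).const_add (a₀ / √t)
  exact h.deriv

theorem phi22_eq_zero : phi22 a₀ a₁ t = 0 := by
  ext s
  simp [phi22, phi2_eq]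

theorem phi1_eq (ht : 0 < t) :
    phi1 a₀ a₁ t = fun s => -a₀ / (2 * t * √t) - a₁ * s / t ^ 2 := by
  ext s
  have hsqrt : √t ≠ 0 := (Real.sqrt_pos.mpr ht).ne'
  have h₀ : HasDerivAt (fun u => a₀ / √u) (-a₀ / (2 * t * √t)) t := by
    refine (((Real.hasDerivAt_sqrt ht.ne').inv hsqrt).const_mul a₀).congr_deriv ?_
    rw [Real.sq_sqrt ht.le]
    ring
  have h₁ : HasDerivAt (fun u => a₁ * s / u) (-(a₁ * s) / t ^ 2) t := by
    simpa [div_eq_mul_inv, neg_div] using (hasDerivAt_inv ht.ne').const_mul (a₁ * s)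
  rw [phi1]
  unfold phiFn
  rw [(h₀.fun_add h₁).deriv]
  ring

theorem phi12_eq (ht : 0 < t) (s : ℝ) : phi12 a₀ a₁ t s = -a₁ / t ^ 2 := by
  have h : HasDerivAt (fun v => -a₀ / (2 * t * √t) - a₁ * v / t ^ 2) (-a₁ / t ^ 2) s := by
    simpa [neg_div] using
      (((hasDerivAt_id s).const_mul a₁).div_const (t ^ 2)).const_sub (-a₀ / (2 * t * √t))
  rw [phi12, phi1_eq ht, h.deriv]

theorem phiFn_sq {r : ℝ} (hr : 0 < r) (s : ℝ) :
    phiFn a₀ a₁ (r ^ 2) s = (r * a₀ + a₁ * s) / r ^ 2 := by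
  rw [phiFn, Real.sqrt_sq hr.le]
  field_simp

theorem Hfn_eq (ha₀ : a₀ ≠ 0) (ht : 0 < t) : Hfn a₀ a₁ t = fun _ => 1 / (2 * t) := by
  ext s
  obtain ⟨r, hr, rfl⟩ : ∃ r, 0 < r ∧ r ^ 2 = t := ⟨√t, Real.sqrt_pos.mpr ht, Real.sq_sqrt ht.le⟩
  -- the denominator of `H` is `2 (φ - s φ₂) = 2 a₀ / √t`
  simp only [Hfn, phiFn_sq hr, phi2_eq, phi22_eq_zero, phi1_eq ht, phi12_eq ht,
    Real.sqrt_sq hr.le, Pi.zero_apply]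
  field_simp
  ring

theorem H2_eq_zero (ha₀ : a₀ ≠ 0) (ht : 0 < t) : H2 a₀ a₁ t = 0 := by
  ext s
  simp [H2, Hfn_eq ha₀ ht]

theorem H22_eq_zero (ha₀ : a₀ ≠ 0) (ht : 0 < t) : H22 a₀ a₁ t = 0 := by
  ext s
  simp [H22, H2_eq_zero ha₀ ht]

theorem H222_eq_zero (ha₀ : a₀ ≠ 0) (ht : 0 < t) : H222 a₀ a₁ t = 0 := by
  ext s
  simp [H222, H22_eq_zero ha₀ ht]

theorem isOpen_setOf_phiFn_ne_zero : IsOpen {s | phiFn a₀ a₁ t s ≠ 0} :=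
  isOpen_ne_fun (by unfold phiFn; fun_prop) continuous_const

theorem Efn_eqOn (ha₀ : a₀ ≠ 0) (ht : 0 < t) :
    EqOn (Efn a₀ a₁ t) (fun s => -s / t) {s | phiFn a₀ a₁ t s ≠ 0} := by
  intro s (hφ : phiFn a₀ a₁ t s ≠ 0)
  obtain ⟨r, hr, rfl⟩ : ∃ r, 0 < r ∧ r ^ 2 = t := ⟨√t, Real.sqrt_pos.mpr ht, Real.sq_sqrt ht.le⟩
  have hnum : r * a₀ + a₁ * s ≠ 0 := fun h => hφ (by rw [phiFn_sq hr, h, zero_div])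
  simp only [Efn, phiFn_sq hr, Hfn_eq ha₀ ht, phi1_eq ht, phi2_eq, Real.sqrt_sq hr.le]
  field_simp
  ring

theorem E2_eqOn (ha₀ : a₀ ≠ 0) (ht : 0 < t) :
    EqOn (E2 a₀ a₁ t) (fun _ => -1 / t) {s | phiFn a₀ a₁ t s ≠ 0} := by
  intro s hs
  rw [E2, (Efn_eqOn ha₀ ht).deriv isOpen_setOf_phiFn_ne_zero hs]
  exact ((hasDerivAt_id s).neg.div_const t).deriv

theorem E22_eqOn (ha₀ : a₀ ≠ 0) (ht : 0 < t) :
    EqOn (E22 a₀ a₁ t) 0 {s | phiFn a₀ a₁ t s ≠ 0} := by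
  intro s hs
  rw [E22, (E2_eqOn ha₀ ht).deriv isOpen_setOf_phiFn_ne_zero hs]
  simp

end

theorem weak_Landsberg_conditions_for_solution (a₀ a₁ : ℝ) (ha₀ : a₀ ≠ 0)
    (t s : ℝ) (ht : 0 < t) (hφ : phiFn a₀ a₁ t s ≠ 0) :
    E22 a₀ a₁ t s = 0 ∧
    H222 a₀ a₁ t s = 0 ∧
    (Efn a₀ a₁ t s - s * E2 a₀ a₁ t s) * phi2 a₀ a₁ t s
      + (H2 a₀ a₁ t s - s * H22 a₀ a₁ t s)
        * (s * phiFn a₀ a₁ t s + (t - s ^ 2) * phi2 a₀ a₁ t s) = 0 := by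
  refine ⟨E22_eqOn ha₀ ht hφ, by rw [H222_eq_zero ha₀ ht, Pi.zero_apply], ?_⟩
  rw [Efn_eqOn ha₀ ht hφ, E2_eqOn ha₀ ht hφ, H2_eq_zero ha₀ ht, H22_eq_zero ha₀ ht]
  simp only [Pi.zero_apply]
  ring
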